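/- arXiv:1702.01390 — 3 statements merged into one kernel-verified Lean document; each statement's English description precedes it below -/
import Mathlib

section
/- Kneser's conjecture: For all integers k ≥ 1 and n ≥ 2k-1, the chromatic number of the Kneser graph KG(n,k) equals n - 2k + 2. -/
/-- Membership in the Hom poset `Hom_p(K_r, H)`: an `r`-tuple (indexed by `ZMod r`)
of non-empty subsets of `V(H)` such that distinct coordinates are completely joined. -/
def HomPosetMem {V : Type*} (H : SimpleGraph V) (r : ℕ) (A : ZMod r → Set V) : Prop :=
  (∀ i, (A i).Nonempty) ∧ ∀ i j : ZMod r, i ≠ j → ∀ a ∈ A i, ∀ b ∈ A j, H.Adj a b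

/-- The Hom poset `Hom_p(K_r, H)`. -/
def HomPoset {V : Type*} (H : SimpleGraph V) (r : ℕ) : Type _ :=
  {A : ZMod r → Set V // HomPosetMem H r A}

instance {V : Type*} (H : SimpleGraph V) (r : ℕ) : PartialOrder (HomPoset H r) :=
  PartialOrder.lift Subtype.val Subtype.val_injective

/-- The cyclic-shift action of `ZMod r` on `Hom_p(K_r, H)`. -/
def homShift {V : Type*} (H : SimpleGraph V) {r : ℕ} (g : ZMod r) (A : HomPoset H r) :
    HomPoset H r :=
  ⟨fun i => A.1 (i + g),
    ⟨fun i => A.2.1 (i + g),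
     fun i j hij a ha b hb => A.2.2 (i + g) (j + g) (fun h => hij (by
       have := add_right_cancel h; exact this)) a ha b hb⟩⟩

/-- The compatibility graph of `Hom_p(K_r, H)` with the cyclic shift `ZMod r`-action:
two distinct tuples are adjacent iff one is comparable to a nontrivial shift of the other. -/
def compatGraph {V : Type*} (H : SimpleGraph V) (r : ℕ) : SimpleGraph (HomPoset H r) where
  Adj x y := x ≠ y ∧ ∃ g : ZMod r, g ≠ 0 ∧
      (x ≤ homShift H g y ∨ homShift H g y ≤ x ∨ y ≤ homShift H g x ∨ homShift H g x ≤ y)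
  symm := by
    constructor
    rintro x y ⟨hne, g, hg, hc⟩
    exact ⟨hne.symm, g, hg, by tauto⟩
  loopless := by constructor; rintro x ⟨hne, _⟩; exact hne rfl

/-- The Kneser graph `KG(n,k)`. -/
def KneserGraph (n k : ℕ) : SimpleGraph {S : Finset (Fin n) // S.card = k} where
  Adj S T := S ≠ T ∧ Disjoint S.1 T.1
  symm := ⟨fun S T ⟨h, d⟩ => ⟨h.symm, d.symm⟩⟩
  loopless := ⟨fun S ⟨h, _⟩ => h rfl⟩

/-!
The colouring of a `k`-set by its least element, capped at `n + 1 - 2k`, is proper: two sets of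
the same colour either share their least element or both lie among the last `2k - 1` points.

Conversely (Matoušek), a proper colouring with `n + 1 - 2k` colours would give an antipodal
labelling of the nonzero sign vectors in `{-1, 0, 1}ⁿ` by integers of absolute value below `n`
without complementary edges: a sign vector with at least `2k - 1` nonzero entries is labelled
`±(2k - 1 + c)`, where `c` is the largest colour of a `k`-set inside its positive or its negative
support, and a smaller one by its number of nonzero entries, signed as its first nonzero entry.
Fan's form of the octahedral Tucker lemma forbids such a labelling.

Tucker's lemma follows from a door-counting parity argument. Let `α j` be the parity of the number
of flags of sign vectors on the first `j` coordinates whose labels, ordered by absolute value,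
alternate in sign starting with `+`. A flag has an odd number of alternating facets iff it is
alternating with either initial sign. Summing this over the flags in the hemisphere `x j > 0` of
the first `j + 1` coordinates, interior facets cancel in pairs and the boundary facets are the flags
counted by `α j`; negation identifies the flags of the other hemisphere. Hence `α (j + 1) = α j`,
so `α n = α 0 = 1`, and an alternating flag of length `n` has a label of absolute value `≥ n`.
-/

open Finset

namespace OctahedralTucker

open Classical in
noncomputable def ind (P : Prop) : ZMod 2 := if P then 1 else 0

lemma ind_pos {P : Prop} (h : P) : ind P = 1 := by simp [ind, h]

lemma ind_neg {P : Prop} (h : ¬P) : ind P = 0 := by simp [ind, h]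

lemma ind_and (P Q : Prop) : ind (P ∧ Q) = ind P * ind Q := by
  unfold ind; split_ifs <;> tauto

/-- The absolute values strictly increase along the list and the signs alternate, starting with
the sign of `s`. -/
def AltSorted (s : ℤ) : List ℤ → Prop
  | [] => True
  | a :: l => 0 < s * a ∧ (∀ b ∈ l, |a| < |b|) ∧ AltSorted (-s) l

def Alternating (s : ℤ) (L : List ℤ) : Prop := ∃ l, L.Perm l ∧ AltSorted s l

lemma alternating_nil (s : ℤ) : Alternating s [] := ⟨[], List.Perm.refl _, trivial⟩

lemma alternating_iff_of_perm {s : ℤ} {L L' : List ℤ} (h : L.Perm L') :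
    Alternating s L ↔ Alternating s L' :=
  ⟨fun ⟨l, hl, ha⟩ => ⟨l, h.symm.trans hl, ha⟩, fun ⟨l, hl, ha⟩ => ⟨l, h.trans hl, ha⟩⟩

lemma AltSorted.nodup {s : ℤ} {l : List ℤ} (h : AltSorted s l) : l.Nodup := by
  induction l generalizing s with
  | nil => exact List.nodup_nil
  | cons a l ih =>
    obtain ⟨-, hlt, hl⟩ := h
    exact List.nodup_cons.mpr ⟨fun ha => (hlt a ha).false, ih hl⟩

lemma Alternating.nodup {s : ℤ} {L : List ℤ} (h : Alternating s L) : L.Nodup :=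
  let ⟨_, hperm, hl⟩ := h
  hperm.nodup_iff.mpr hl.nodup

lemma alternating_cons_iff {s a : ℤ} {l : List ℤ} (hmin : ∀ b ∈ l, |a| ≤ |b|) :
    Alternating s (a :: l) ↔ 0 < s * a ∧ (∀ b ∈ l, |a| < |b|) ∧ Alternating (-s) l := by
  constructor
  · rintro ⟨_ | ⟨c, l'⟩, hperm, halt⟩
    · exact absurd hperm.length_eq (by simp)
    obtain ⟨hsc, hlt, halt'⟩ := halt
    obtain rfl : a = c := by
      rcases List.mem_cons.mp (hperm.subset List.mem_cons_self) with h | h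
      · exact h
      rcases List.mem_cons.mp (hperm.symm.subset List.mem_cons_self) with h' | h'
      · exact h'.symm
      · exact absurd (hmin c h') (not_le.mpr (hlt a h))
    have hll : l.Perm l' := hperm.cons_inv
    exact ⟨hsc, fun b hb => hlt b (hll.subset hb), l', hll, halt'⟩
  · rintro ⟨hs, hlt, l', hl', halt'⟩
    exact ⟨a :: l', hl'.cons a, hs, fun b hb => hlt b (hl'.symm.subset hb), halt'⟩

lemma alternating_cons_iff_of_lt {s a : ℤ} {l : List ℤ} (hlt : ∀ b ∈ l, |a| < |b|) :
    Alternating s (a :: l) ↔ 0 < s * a ∧ Alternating (-s) l := by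
  rw [alternating_cons_iff fun b hb => (hlt b hb).le]
  exact ⟨fun h => ⟨h.1, h.2.2⟩, fun h => ⟨h.1, hlt, h.2⟩⟩

lemma altSorted_map_neg {l : List ℤ} {s : ℤ} : AltSorted s (l.map (-·)) ↔ AltSorted (-s) l := by
  induction l generalizing s with
  | nil => simp [AltSorted]
  | cons a l ih =>
    simp only [List.map_cons, AltSorted, List.mem_map, forall_exists_index, and_imp,
      forall_apply_eq_imp_iff₂, abs_neg, ih, neg_neg, mul_neg, neg_mul]

lemma alternating_map_neg {s : ℤ} {L : List ℤ} :
    Alternating s (L.map (-·)) ↔ Alternating (-s) L := by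
  constructor
  · rintro ⟨l, hperm, halt⟩
    refine ⟨l.map (-·), ?_, altSorted_map_neg.mp (by simpa [Function.comp_def] using halt)⟩
    simpa [Function.comp_def] using hperm.map (-·)
  · rintro ⟨l, hperm, halt⟩
    exact ⟨l.map (-·), hperm.map _, altSorted_map_neg.mpr halt⟩

lemma AltSorted.exists_add_length_le_abs {s : ℤ} {l : List ℤ} (h : AltSorted s l) (hl : l ≠ [])
    {k : ℤ} (hk : ∀ b ∈ l, k < |b|) : ∃ a ∈ l, k + l.length ≤ |a| := by
  induction l generalizing s k with
  | nil => exact absurd rfl hl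
  | cons a l ih =>
    obtain ⟨-, hlt, halt⟩ := h
    have ha := hk a List.mem_cons_self
    rcases eq_or_ne l [] with rfl | hne
    · exact ⟨a, List.mem_cons_self, by simp; omega⟩
    obtain ⟨b, hb, hkb⟩ := ih halt hne (k := k + 1) fun b hb => by have := hlt b hb; omega
    exact ⟨b, List.mem_cons_of_mem a hb, by simp; omega⟩

lemma sum_eraseIdx_eq_of_perm {α M : Type*} [AddCommMonoid M] {L L' : List α} (h : L.Perm L')
    (G : List α → M) (hG : ∀ l l', l.Perm l' → G l = G l') :
    ∑ t ∈ range L.length, G (L.eraseIdx t) = ∑ t ∈ range L'.length, G (L'.eraseIdx t) := by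
  induction h generalizing G with
  | nil => rfl
  | cons x _ ih =>
    simp only [List.length_cons, sum_range_succ', List.eraseIdx_cons_succ,
      List.eraseIdx_cons_zero]
    rw [hG _ _ ‹_›, ih (fun l => G (x :: l)) fun l l' hp => hG _ _ (hp.cons x)]
  | swap x y l =>
    have hxy : ∀ l', G (y :: x :: l') = G (x :: y :: l') := fun _ => hG _ _ (.swap x y _)
    simp only [List.length_cons, sum_range_succ', List.eraseIdx_cons_succ,
      List.eraseIdx_cons_zero, hxy]
    abel
  | trans _ _ ih₁ ih₂ => rw [ih₁ G hG, ih₂ G hG]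

/-- A repeated entry makes every facet but the two obtained by deleting one of its copies
non-alternating, and those two coincide. -/
lemma sum_ind_alternating_eraseIdx_cons_of_mem {a : ℤ} {l : List ℤ} (hal : a ∈ l) (s : ℤ) :
    ∑ t ∈ range (a :: l).length, ind (Alternating s ((a :: l).eraseIdx t)) = 0 := by
  rw [sum_eraseIdx_eq_of_perm ((List.perm_cons_erase hal).cons a) (fun l => ind (Alternating s l))
    fun l l' hp => by rw [alternating_iff_of_perm hp]]
  have hdup : ∀ l', ind (Alternating s (a :: a :: l')) = 0 := fun l' =>
    ind_neg fun h => (List.nodup_cons.mp h.nodup).1 List.mem_cons_self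
  simp only [List.length_cons, sum_range_succ', List.eraseIdx_cons_succ,
    List.eraseIdx_cons_zero, hdup, sum_const_zero, zero_add]
  exact CharTwo.add_self_eq_zero _

lemma sum_ind_alternating_eraseIdx_of_sorted (L : List ℤ)
    (hsort : L.Pairwise fun a b => |a| ≤ |b|) (h0 : ∀ a ∈ L, a ≠ 0)
    (hties : ∀ a ∈ L, ∀ b ∈ L, |a| = |b| → a = b) (s : ℤ) (hs : s ≠ 0) :
    ∑ t ∈ range L.length, ind (Alternating s (L.eraseIdx t)) =
      ind (Alternating s L) + ind (Alternating (-s) L) := by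
  induction L generalizing s with
  | nil => simp [ind_pos (alternating_nil _), CharTwo.add_self_eq_zero]
  | cons a l ih =>
    by_cases hal : a ∈ l
    · have hnd : ∀ s', ¬ Alternating s' (a :: l) := fun s' h =>
        (List.nodup_cons.mp h.nodup).1 hal
      rw [sum_ind_alternating_eraseIdx_cons_of_mem hal, ind_neg (hnd s), ind_neg (hnd (-s)),
        add_zero]
    have hlt : ∀ b ∈ l, |a| < |b| := fun b hb =>
      ((List.pairwise_cons.mp hsort).1 b hb).lt_of_ne fun h =>
        hal (hties a List.mem_cons_self b (List.mem_cons_of_mem a hb) h ▸ hb)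
    have hfacet : ∀ t, ind (Alternating s (a :: l.eraseIdx t)) =
        ind (0 < s * a) * ind (Alternating (-s) (l.eraseIdx t)) := fun t => by
      rw [alternating_cons_iff_of_lt fun b hb => hlt b ((l.eraseIdx_sublist t).subset hb),
        ind_and]
    have ih' := ih (List.pairwise_cons.mp hsort).2 (fun b hb => h0 b (.tail a hb))
      (fun b hb c hc => hties b (.tail a hb) c (.tail a hc)) (-s) (neg_ne_zero.mpr hs)
    rw [neg_neg] at ih'
    simp only [List.length_cons, sum_range_succ', List.eraseIdx_cons_succ,
      List.eraseIdx_cons_zero, hfacet, ← mul_sum, ih', alternating_cons_iff_of_lt hlt, neg_neg,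
      ind_and]
    have ha : a ≠ 0 := h0 a List.mem_cons_self
    rcases lt_or_gt_of_ne (mul_ne_zero hs ha) with hneg | hpos
    · rw [ind_neg hneg.not_gt, ind_pos (by linarith : 0 < -s * a)]
      simp only [zero_mul, one_mul, zero_add]
    · rw [ind_pos hpos, ind_neg (by linarith : ¬ 0 < -s * a)]
      rw [one_mul, one_mul, zero_mul, add_zero, add_assoc, CharTwo.add_self_eq_zero, add_zero]

lemma sum_ind_alternating_eraseIdx (L : List ℤ) (h0 : ∀ a ∈ L, a ≠ 0)
    (hties : ∀ a ∈ L, ∀ b ∈ L, |a| = |b| → a = b) (s : ℤ) (hs : s ≠ 0) :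
    ∑ t ∈ range L.length, ind (Alternating s (L.eraseIdx t)) =
      ind (Alternating s L) + ind (Alternating (-s) L) := by
  let r : ℤ → ℤ → Prop := fun a b => |a| ≤ |b|
  have : Std.Total r := ⟨fun a b => le_total _ _⟩
  have : IsTrans ℤ r := ⟨fun _ _ _ => le_trans⟩
  have hperm : (L.insertionSort r).Perm L := List.perm_insertionSort r L
  rw [← sum_eraseIdx_eq_of_perm hperm (fun l => ind (Alternating s l))
    fun l l' hp => by rw [alternating_iff_of_perm hp],
    ← alternating_iff_of_perm hperm, ← alternating_iff_of_perm hperm]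
  exact sum_ind_alternating_eraseIdx_of_sorted _ (List.pairwise_insertionSort r L)
    (fun a ha => h0 a (hperm.subset ha))
    (fun a ha b hb => hties a (hperm.subset ha) b (hperm.subset hb)) s hs

section Flags

variable {n : ℕ}

def IsFace (x y : Fin n → ℤ) : Prop := ∀ i, x i = 0 ∨ x i = y i

/-- `f` encodes the chain of sign vectors `flagVec f 1, …, flagVec f j`, each a face of the next:
step `s` turns on coordinate `(f s).1`, with sign `+` or `-` according to `(f s).2`. -/
def flagVec {j : ℕ} (f : Fin j → Fin n × Bool) (t : ℕ) : Fin n → ℤ :=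
  fun i => ∑ s : Fin j, if s.val < t ∧ (f s).1 = i then (if (f s).2 then 1 else -1) else 0

def IsFlag {j : ℕ} (f : Fin j → Fin n × Bool) : Prop :=
  Function.Injective (fun s => (f s).1) ∧ ∀ s, ((f s).1 : ℕ) < j

def flagLabels (lam : (Fin n → ℤ) → ℤ) {j : ℕ} (f : Fin j → Fin n × Bool) : List ℤ :=
  (List.range j).map fun t => lam (flagVec f (t + 1))

variable {j : ℕ} {f : Fin j → Fin n × Bool}

lemma flagVec_apply_fst (hf : IsFlag f) (t : ℕ) (s : Fin j) :
    flagVec f t (f s).1 = if s.val < t then (if (f s).2 then 1 else -1) else 0 := by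
  unfold flagVec
  rw [sum_eq_single s (fun s' _ hne => if_neg fun h => hne (hf.1 h.2)) (by simp)]
  simp

lemma flagVec_ne_zero (hf : IsFlag f) {t : ℕ} (ht : 1 ≤ t) (htj : t ≤ j) : flagVec f t ≠ 0 := by
  intro h
  have := congrFun h (f ⟨0, by omega⟩).1
  rw [flagVec_apply_fst hf, if_pos (by simp; omega)] at this
  exact absurd this (by split_ifs <;> simp)

lemma isFace_flagVec (hf : IsFlag f) {t₁ t₂ : ℕ} (h : t₁ ≤ t₂) :
    IsFace (flagVec f t₁) (flagVec f t₂) := by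
  intro i
  by_cases hex : ∃ s : Fin j, s.val < t₁ ∧ (f s).1 = i
  · obtain ⟨s, hs, rfl⟩ := hex
    rw [flagVec_apply_fst hf, flagVec_apply_fst hf, if_pos hs, if_pos (show s.val < t₂ by omega)]
    exact Or.inr rfl
  · push Not at hex
    exact Or.inl (sum_eq_zero fun s _ => if_neg fun hs => hex s hs.1 hs.2)

lemma IsFlag.comp_perm (hf : IsFlag f) (σ : Equiv.Perm (Fin j)) : IsFlag (f ∘ σ) :=
  ⟨hf.1.comp σ.injective, fun s => hf.2 (σ s)⟩

lemma flagVec_comp_perm (f : Fin j → Fin n × Bool) (σ : Equiv.Perm (Fin j)) {t : ℕ}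
    (hσ : ∀ s, (σ s).val < t ↔ s.val < t) : flagVec (f ∘ σ) t = flagVec f t := by
  funext i
  simp only [flagVec, Function.comp_apply]
  rw [← Equiv.sum_comp σ fun s => if s.val < t ∧ (f s).1 = i then
    (if (f s).2 then 1 else -1) else 0]
  simp only [hσ]

lemma flagVec_init {j : ℕ} (f : Fin (j + 1) → Fin n × Bool) {t : ℕ} (ht : t ≤ j) :
    flagVec (Fin.init f) t = flagVec f t := by
  funext i
  simp only [flagVec, Fin.sum_univ_castSucc, Fin.val_last]
  rw [if_neg (by omega), add_zero]
  rfl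

lemma IsFlag.exists_fst_eq (hf : IsFlag f) (i : Fin n) (hi : i.val < j) : ∃ s, (f s).1 = i := by
  have hinj : Function.Injective fun s : Fin j => (⟨(f s).1, hf.2 s⟩ : Fin j) :=
    fun a b hab => hf.1 (Fin.ext (Fin.mk.inj_iff.mp hab))
  obtain ⟨s, hs⟩ := Finite.surjective_of_injective hinj ⟨i, hi⟩
  exact ⟨s, Fin.ext (Fin.mk.inj_iff.mp hs)⟩

variable (lam : (Fin n → ℤ) → ℤ)

lemma length_flagLabels (f : Fin j → Fin n × Bool) : (flagLabels lam f).length = j := by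
  simp [flagLabels]

lemma exists_of_mem_flagLabels {a : ℤ} (ha : a ∈ flagLabels lam f) :
    ∃ t < j, a = lam (flagVec f (t + 1)) := by
  obtain ⟨t, ht, rfl⟩ := List.mem_map.mp ha
  exact ⟨t, List.mem_range.mp ht, rfl⟩

lemma flagLabels_eraseIdx_congr {g : Fin j → Fin n × Bool} {t : ℕ}
    (h : ∀ u < j, u ≠ t → lam (flagVec f (u + 1)) = lam (flagVec g (u + 1))) :
    (flagLabels lam f).eraseIdx t = (flagLabels lam g).eraseIdx t := by
  unfold flagLabels
  apply List.ext_getElem (by simp [List.length_eraseIdx])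
  intro u h₁ h₂
  simp only [List.length_eraseIdx, List.length_map, List.length_range] at h₁
  have hu : u < j := by split_ifs at h₁ <;> omega
  rw [List.getElem_eraseIdx, List.getElem_eraseIdx]
  split_ifs with hut <;> simp only [List.getElem_map, List.getElem_range]
  · exact h u hu (by omega)
  · exact h (u + 1) (by split_ifs at h₁ <;> omega) (by omega)

section Labelling

variable {lam}
variable (hcomp : ∀ x y, x ≠ 0 → IsFace x y → lam x ≠ -lam y)
include hcomp

lemma ne_zero_of_forall_ne_neg {x : Fin n → ℤ} (hx : x ≠ 0) : lam x ≠ 0 := fun h =>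
  hcomp x x hx (fun _ => Or.inr rfl) (by rw [h, neg_zero])

lemma flagLabels_ne_zero (hf : IsFlag f) : ∀ a ∈ flagLabels lam f, a ≠ 0 := by
  intro a ha
  obtain ⟨t, ht, rfl⟩ := exists_of_mem_flagLabels lam ha
  exact ne_zero_of_forall_ne_neg hcomp (flagVec_ne_zero hf (by omega) (by omega))

lemma flagLabels_eq_of_abs_eq (hf : IsFlag f) :
    ∀ a ∈ flagLabels lam f, ∀ b ∈ flagLabels lam f, |a| = |b| → a = b := by
  have key : ∀ t₁ t₂, t₁ ≤ t₂ → t₂ < j → |lam (flagVec f (t₁ + 1))| = |lam (flagVec f (t₂ + 1))| →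
      lam (flagVec f (t₁ + 1)) = lam (flagVec f (t₂ + 1)) := fun t₁ t₂ h12 h2 habs =>
    (abs_eq_abs.mp habs).resolve_right
      (hcomp _ _ (flagVec_ne_zero hf (by omega) (by omega)) (isFace_flagVec hf (by omega)))
  intro a ha b hb hab
  obtain ⟨t₁, ht₁, rfl⟩ := exists_of_mem_flagLabels lam ha
  obtain ⟨t₂, ht₂, rfl⟩ := exists_of_mem_flagLabels lam hb
  rcases le_total t₁ t₂ with h | h
  · exact key t₁ t₂ h ht₂ hab
  · exact (key t₂ t₁ h ht₁ hab.symm).symm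

end Labelling

end Flags

section Parity

open Classical

variable {n : ℕ} (lam : (Fin n → ℤ) → ℤ)

noncomputable def alternatingFlagParity (j : ℕ) : ZMod 2 :=
  ∑ f ∈ univ.filter (fun f : Fin j → Fin n × Bool => IsFlag f),
    ind (Alternating 1 (flagLabels lam f))

lemma alternatingFlagParity_zero : alternatingFlagParity lam 0 = 1 := by
  have hflag (f : Fin 0 → Fin n × Bool) : IsFlag f :=
    ⟨Function.injective_of_subsingleton _, finZeroElim⟩
  rw [alternatingFlagParity, filter_true_of_mem fun f _ => hflag f, univ_unique, sum_singleton,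
    ind_pos]
  simpa [flagLabels] using alternating_nil 1

section Hemisphere

variable {j : ℕ}

def negFlag (f : Fin j → Fin n × Bool) : Fin j → Fin n × Bool := fun s => ((f s).1, !(f s).2)

lemma negFlag_negFlag (f : Fin j → Fin n × Bool) : negFlag (negFlag f) = f := by
  funext s; simp [negFlag]

lemma flagVec_negFlag (f : Fin j → Fin n × Bool) (t : ℕ) :
    flagVec (negFlag f) t = -flagVec f t := by
  funext i
  simp only [flagVec, Pi.neg_apply, ← sum_neg_distrib]
  refine sum_congr rfl fun s _ => ?_
  by_cases h : s.val < t ∧ (f s).1 = i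
  · cases hs : (f s).2 <;> simp [negFlag, h, hs]
  · simp [negFlag, h]

lemma flagLabels_negFlag (hanti : ∀ x, x ≠ 0 → lam (-x) = -lam x) {f : Fin j → Fin n × Bool}
    (hf : IsFlag f) : flagLabels lam (negFlag f) = (flagLabels lam f).map (-·) := by
  simp only [flagLabels, List.map_map]
  refine List.map_congr_left fun t ht => ?_
  have ht : t < j := List.mem_range.mp ht
  simp only [Function.comp_apply, flagVec_negFlag]
  exact hanti _ (flagVec_ne_zero hf (by omega) (by omega))

def PositiveAt (i : Fin n) (f : Fin j → Fin n × Bool) : Prop := ∀ s, (f s).1 = i → (f s).2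

lemma PositiveAt.comp_perm {i : Fin n} {f : Fin j → Fin n × Bool} (hf : PositiveAt i f)
    (σ : Equiv.Perm (Fin j)) : PositiveAt i (f ∘ σ) :=
  fun s hs => hf (σ s) hs

/-- Negating a flag exchanges the two hemispheres `x i > 0` and `x i < 0`, so the negative one
contributes the flags of the positive one whose labels alternate starting negatively. -/
lemma alternatingFlagParity_eq_sum_positiveAt (hanti : ∀ x, x ≠ 0 → lam (-x) = -lam x)
    (i : Fin n) (hi : i.val < j) :
    alternatingFlagParity lam j =
      ∑ f ∈ univ.filter (fun f : Fin j → Fin n × Bool => IsFlag f ∧ PositiveAt i f),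
        (ind (Alternating 1 (flagLabels lam f)) + ind (Alternating (-1) (flagLabels lam f))) := by
  rw [alternatingFlagParity, ← sum_filter_add_sum_filter_not _ (PositiveAt i), filter_filter,
    filter_filter, sum_add_distrib, add_right_inj]
  refine sum_nbij' negFlag negFlag ?_ ?_ (fun f _ => negFlag_negFlag f)
    (fun f _ => negFlag_negFlag f) ?_
  · intro f hf
    obtain ⟨hf, hneg⟩ := (mem_filter.mp hf).2
    obtain ⟨s, hs, hs'⟩ : ∃ s, (f s).1 = i ∧ (f s).2 = false := by
      simpa [PositiveAt] using hneg
    refine mem_filter.mpr ⟨mem_univ _, hf, fun s' hs'' => ?_⟩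
    obtain rfl : s' = s := hf.1 (hs''.trans hs.symm)
    simp [negFlag, hs']
  · intro f hf
    obtain ⟨hf, hpos⟩ := (mem_filter.mp hf).2
    refine mem_filter.mpr ⟨mem_univ _, hf, fun h => ?_⟩
    obtain ⟨s, hs⟩ := hf.exists_fst_eq i hi
    simpa [negFlag, hpos s hs] using h s hs
  · intro f hf
    rw [flagLabels_negFlag lam hanti (mem_filter.mp hf).2.1, alternating_map_neg, neg_neg]

end Hemisphere

section Doors

variable {j : ℕ}

/-- `Fin.ofNat` reduces modulo `j + 1`, which is harmless since only `t < j` is used. -/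
def adjSwap (j t : ℕ) : Equiv.Perm (Fin (j + 1)) :=
  Equiv.swap (Fin.ofNat (j + 1) t) (Fin.ofNat (j + 1) (t + 1))

def flipLast (f : Fin (j + 1) → Fin n × Bool) : Fin (j + 1) → Fin n × Bool :=
  Function.update f (Fin.last j) ((f (Fin.last j)).1, !(f (Fin.last j)).2)

lemma adjSwap_val_lt_iff {t u : ℕ} (ht : t < j) (hu : u ≠ t) (s : Fin (j + 1)) :
    (adjSwap j t s).val < u + 1 ↔ s.val < u + 1 := by
  have h₁ : (Fin.ofNat (j + 1) t).val = t := Nat.mod_eq_of_lt (by omega)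
  have h₂ : (Fin.ofNat (j + 1) (t + 1)).val = t + 1 := Nat.mod_eq_of_lt (by omega)
  unfold adjSwap
  rcases eq_or_ne s (Fin.ofNat (j + 1) t) with rfl | hs₁
  · rw [Equiv.swap_apply_left, h₁, h₂]; omega
  rcases eq_or_ne s (Fin.ofNat (j + 1) (t + 1)) with rfl | hs₂
  · rw [Equiv.swap_apply_right, h₁, h₂]; omega
  · rw [Equiv.swap_apply_of_ne_of_ne hs₁ hs₂]

lemma flagLabels_adjSwap_eraseIdx (f : Fin (j + 1) → Fin n × Bool) {t : ℕ} (ht : t < j) :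
    (flagLabels lam (f ∘ adjSwap j t)).eraseIdx t = (flagLabels lam f).eraseIdx t :=
  flagLabels_eraseIdx_congr lam fun _ _ hu => by
    rw [flagVec_comp_perm f _ (adjSwap_val_lt_iff ht hu)]

lemma flipLast_apply_of_ne (f : Fin (j + 1) → Fin n × Bool) {s : Fin (j + 1)}
    (hs : s ≠ Fin.last j) : flipLast f s = f s :=
  Function.update_of_ne hs _ _

lemma fst_flipLast (f : Fin (j + 1) → Fin n × Bool) (s : Fin (j + 1)) :
    (flipLast f s).1 = (f s).1 := by
  rcases eq_or_ne s (Fin.last j) with rfl | hs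
  · simp [flipLast]
  · rw [flipLast_apply_of_ne f hs]

lemma snd_flipLast_last (f : Fin (j + 1) → Fin n × Bool) :
    (flipLast f (Fin.last j)).2 = !(f (Fin.last j)).2 := by
  simp [flipLast]

lemma flipLast_flipLast (f : Fin (j + 1) → Fin n × Bool) : flipLast (flipLast f) = f := by
  funext s
  rcases eq_or_ne s (Fin.last j) with rfl | hs
  · exact Prod.ext (by simp only [fst_flipLast]) (by simp only [snd_flipLast_last, Bool.not_not])
  · rw [flipLast_apply_of_ne _ hs, flipLast_apply_of_ne _ hs]

lemma isFlag_flipLast_iff {f : Fin (j + 1) → Fin n × Bool} : IsFlag (flipLast f) ↔ IsFlag f := by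
  simp only [IsFlag, fst_flipLast]

lemma init_flipLast (f : Fin (j + 1) → Fin n × Bool) : Fin.init (flipLast f) = Fin.init f :=
  funext fun s => flipLast_apply_of_ne f (Fin.castSucc_ne_last s)

lemma flagLabels_flipLast_eraseIdx (f : Fin (j + 1) → Fin n × Bool) :
    (flagLabels lam (flipLast f)).eraseIdx j = (flagLabels lam f).eraseIdx j :=
  flagLabels_eraseIdx_congr lam fun u hu _ => by
    rw [← flagVec_init f (by omega), ← flagVec_init _ (by omega), init_flipLast]

lemma PositiveAt.flipLast {i : Fin n} {f : Fin (j + 1) → Fin n × Bool} (hf : PositiveAt i f)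
    (hne : (f (Fin.last j)).1 ≠ i) : PositiveAt i (flipLast f) := by
  intro s hs
  rw [fst_flipLast] at hs
  rw [flipLast_apply_of_ne f fun h => hne (h ▸ hs)]
  exact hf s hs

/-- A flag of the hemisphere `x i > 0` of the first `j + 1` coordinates, together with the level
deleted to form a facet. -/
noncomputable def doors (i : Fin n) (j : ℕ) : Finset ((Fin (j + 1) → Fin n × Bool) × ℕ) :=
  univ.filter (fun f => IsFlag f ∧ PositiveAt i f) ×ˢ range (j + 1)

lemma mem_doors {i : Fin n} {a : (Fin (j + 1) → Fin n × Bool) × ℕ} :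
    a ∈ doors i j ↔ (IsFlag a.1 ∧ PositiveAt i a.1) ∧ a.2 ≤ j := by
  simp [doors]

/-- The facet lies on the boundary of the hemisphere: it is a flag of the first `j` coordinates,
the deleted level being the last one, where `x i` is turned on. -/
def IsBoundaryDoor (i : Fin n) (a : (Fin (j + 1) → Fin n × Bool) × ℕ) : Prop :=
  a.2 = j ∧ (a.1 (Fin.last j)).1 = i

/-- The other flag through the same interior facet. -/
def doorPartner (a : (Fin (j + 1) → Fin n × Bool) × ℕ) : (Fin (j + 1) → Fin n × Bool) × ℕ :=
  if a.2 < j then (a.1 ∘ adjSwap j a.2, a.2) else (flipLast a.1, a.2)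

lemma doorPartner_doorPartner (a : (Fin (j + 1) → Fin n × Bool) × ℕ) :
    doorPartner (doorPartner a) = a := by
  unfold doorPartner
  split_ifs with h
  · ext s <;> simp [adjSwap, Equiv.swap_apply_self]
  · exact Prod.ext (flipLast_flipLast _) rfl

lemma mem_doors_filter_doorPartner {i : Fin n} {a : (Fin (j + 1) → Fin n × Bool) × ℕ}
    (ha : a ∈ (doors i j).filter (¬ IsBoundaryDoor i ·)) :
    doorPartner a ∈ (doors i j).filter (¬ IsBoundaryDoor i ·) := by
  rw [mem_filter, mem_doors] at ha ⊢
  obtain ⟨⟨⟨hf, hpos⟩, ht⟩, hint⟩ := ha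
  unfold doorPartner
  split_ifs with h
  · exact ⟨⟨⟨hf.comp_perm _, hpos.comp_perm _⟩, ht⟩, fun h' => h.ne h'.1⟩
  · have hne : (a.1 (Fin.last j)).1 ≠ i := fun h' => hint ⟨by omega, h'⟩
    exact ⟨⟨⟨isFlag_flipLast_iff.mpr hf, hpos.flipLast hne⟩, ht⟩,
      fun h' => hne (by simpa [IsBoundaryDoor, fst_flipLast] using h'.2)⟩

lemma doorPartner_ne {a : (Fin (j + 1) → Fin n × Bool) × ℕ} (hf : IsFlag a.1) :
    doorPartner a ≠ a := by
  unfold doorPartner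
  split_ifs with h <;> intro heq <;> have heq := congrArg Prod.fst heq
  · have := hf.1 (congrArg (fun f => (f (Fin.ofNat (j + 1) a.2)).1) heq)
    simp only [adjSwap, Equiv.swap_apply_left, Fin.ext_iff,
      Fin.val_ofNat] at this
    rw [Nat.mod_eq_of_lt (by omega), Nat.mod_eq_of_lt (by omega)] at this
    omega
  · have := congrArg (fun f : Fin (j + 1) → Fin n × Bool => (f (Fin.last j)).2) heq
    exact Bool.not_ne_self _ (snd_flipLast_last a.1 ▸ this)

lemma flagLabels_doorPartner_eraseIdx {a : (Fin (j + 1) → Fin n × Bool) × ℕ} (ha : a.2 ≤ j) :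
    (flagLabels lam (doorPartner a).1).eraseIdx (doorPartner a).2 =
      (flagLabels lam a.1).eraseIdx a.2 := by
  unfold doorPartner
  split_ifs with h
  · exact flagLabels_adjSwap_eraseIdx lam a.1 h
  · obtain ⟨f, t⟩ := a
    obtain rfl : t = j := by simp at h ha; omega
    exact flagLabels_flipLast_eraseIdx lam f

lemma sum_interior_doors (i : Fin n) :
    ∑ a ∈ (doors i j).filter (¬ IsBoundaryDoor i ·),
      ind (Alternating 1 ((flagLabels lam a.1).eraseIdx a.2)) = 0 := by
  have hmem {a} (ha : a ∈ (doors i j).filter (¬ IsBoundaryDoor i ·)) :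
      IsFlag a.1 ∧ a.2 ≤ j := by
    rw [mem_filter, mem_doors] at ha
    exact ⟨ha.1.1.1, ha.1.2⟩
  refine sum_involution (fun a _ => doorPartner a) (fun a ha => ?_)
    (fun a ha _ => doorPartner_ne (hmem ha).1) (fun a ha => mem_doors_filter_doorPartner ha)
    (fun a _ => doorPartner_doorPartner a)
  rw [flagLabels_doorPartner_eraseIdx lam (hmem ha).2]
  exact CharTwo.add_self_eq_zero _

lemma flagLabels_init (f : Fin (j + 1) → Fin n × Bool) :
    flagLabels lam (Fin.init f) = (flagLabels lam f).eraseIdx j := by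
  simp only [flagLabels, List.range_succ, List.map_append, List.map_cons, List.map_nil]
  rw [List.eraseIdx_append_of_length_le (by simp), Nat.sub_eq_zero_of_le (by simp),
    List.eraseIdx_cons_zero, List.append_nil]
  exact List.map_congr_left fun t ht => by
    rw [flagVec_init f (by simp at ht; omega)]

lemma IsFlag.init (hj : j < n) {f : Fin (j + 1) → Fin n × Bool} (hf : IsFlag f)
    (hlast : (f (Fin.last j)).1 = ⟨j, hj⟩) : IsFlag (Fin.init f) := by
  refine ⟨hf.1.comp (Fin.castSucc_injective _), fun s => ?_⟩
  have hne : (f s.castSucc).1 ≠ (f (Fin.last j)).1 := fun h =>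
    Fin.castSucc_ne_last s (hf.1 h)
  have := hf.2 s.castSucc
  rw [hlast, Ne, Fin.ext_iff] at hne
  exact lt_of_le_of_ne (Nat.lt_succ_iff.mp this) hne

lemma IsFlag.snoc (hj : j < n) {g : Fin j → Fin n × Bool} (hg : IsFlag g) :
    IsFlag (Fin.snoc g (⟨j, hj⟩, true) : Fin (j + 1) → Fin n × Bool) := by
  refine ⟨fun a b hab => ?_, fun s => ?_⟩
  · induction a using Fin.lastCases <;> induction b using Fin.lastCases <;>
      simp only [Fin.snoc_castSucc, Fin.snoc_last, Fin.ext_iff] at hab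
    · rfl
    · exact absurd hab (hg.2 _).ne'
    · exact absurd hab (hg.2 _).ne
    · rw [hg.1 (Fin.ext hab)]
  · induction s using Fin.lastCases
    · simp
    · simp only [Fin.snoc_castSucc]; exact (hg.2 _).trans (Nat.lt_succ_self j)

lemma positiveAt_snoc (hj : j < n) {g : Fin j → Fin n × Bool} (hg : IsFlag g) :
    PositiveAt ⟨j, hj⟩ (Fin.snoc g (⟨j, hj⟩, true) : Fin (j + 1) → Fin n × Bool) := by
  intro s hs
  induction s using Fin.lastCases
  · simp
  · simp only [Fin.snoc_castSucc, Fin.ext_iff] at hs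
    exact absurd hs (hg.2 _).ne

lemma sum_boundary_doors (hj : j < n) :
    ∑ a ∈ (doors ⟨j, hj⟩ j).filter (IsBoundaryDoor ⟨j, hj⟩),
      ind (Alternating 1 ((flagLabels lam a.1).eraseIdx a.2)) = alternatingFlagParity lam j := by
  refine sum_nbij' (fun a => Fin.init a.1) (fun g => (Fin.snoc g (⟨j, hj⟩, true), j))
    (fun a ha => ?_) (fun g hg => ?_) (fun a ha => ?_) (fun g _ => by simp) (fun a ha => ?_)
  · rw [mem_filter, mem_doors] at ha
    exact mem_filter.mpr ⟨mem_univ _, ha.1.1.1.init hj ha.2.2⟩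
  · have hg := (mem_filter.mp hg).2
    exact mem_filter.mpr ⟨mem_doors.mpr ⟨⟨hg.snoc hj, positiveAt_snoc hj hg⟩, le_rfl⟩, rfl,
      by simp⟩
  · rw [mem_filter, mem_doors] at ha
    obtain ⟨⟨⟨-, hpos⟩, -⟩, ht, hlast⟩ := ha
    have : a.1 (Fin.last j) = (⟨j, hj⟩, true) := Prod.ext hlast (hpos _ hlast)
    exact Prod.ext (by simpa [this] using Fin.snoc_init_self a.1) ht.symm
  · rw [flagLabels_init, (mem_filter.mp ha).2.1]

lemma alternatingFlagParity_succ (hj : j < n) (hanti : ∀ x, x ≠ 0 → lam (-x) = -lam x)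
    (hcomp : ∀ x y, x ≠ 0 → IsFace x y → lam x ≠ -lam y) :
    alternatingFlagParity lam (j + 1) = alternatingFlagParity lam j := by
  have hdoors : ∀ f ∈ univ.filter (fun f : Fin (j + 1) → Fin n × Bool =>
      IsFlag f ∧ PositiveAt ⟨j, hj⟩ f),
      ind (Alternating 1 (flagLabels lam f)) + ind (Alternating (-1) (flagLabels lam f)) =
        ∑ t ∈ range (j + 1), ind (Alternating 1 ((flagLabels lam f).eraseIdx t)) := fun f hf => by
    have hf := (mem_filter.mp hf).2.1
    rw [← sum_ind_alternating_eraseIdx _ (flagLabels_ne_zero hcomp hf)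
      (flagLabels_eq_of_abs_eq hcomp hf) 1 one_ne_zero, length_flagLabels]
  rw [alternatingFlagParity_eq_sum_positiveAt lam hanti ⟨j, hj⟩ (Nat.lt_succ_self j),
    sum_congr rfl hdoors, ← sum_product', ← doors,
    ← sum_filter_add_sum_filter_not _ (IsBoundaryDoor ⟨j, hj⟩), sum_interior_doors, add_zero,
    sum_boundary_doors]

end Doors

end Parity

lemma alternatingFlagParity_eq_one {n : ℕ} {lam : (Fin n → ℤ) → ℤ}
    (hanti : ∀ x, x ≠ 0 → lam (-x) = -lam x)
    (hcomp : ∀ x y, x ≠ 0 → IsFace x y → lam x ≠ -lam y) :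
    ∀ j ≤ n, alternatingFlagParity lam j = 1
  | 0, _ => alternatingFlagParity_zero lam
  | j + 1, hj => (alternatingFlagParity_succ lam hj hanti hcomp).trans
      (alternatingFlagParity_eq_one hanti hcomp j (Nat.le_of_succ_le hj))

theorem exists_ne_zero_le_abs {n : ℕ} (hn : 1 ≤ n) (lam : (Fin n → ℤ) → ℤ)
    (hanti : ∀ x, x ≠ 0 → lam (-x) = -lam x)
    (hcomp : ∀ x y, x ≠ 0 → IsFace x y → lam x ≠ -lam y) :
    ∃ x : Fin n → ℤ, x ≠ 0 ∧ (n : ℤ) ≤ |lam x| := by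
  classical
  have hpar := alternatingFlagParity_eq_one hanti hcomp n le_rfl
  obtain ⟨f, hf, hind⟩ := exists_ne_zero_of_sum_ne_zero (hpar ▸ one_ne_zero :
    alternatingFlagParity lam n ≠ 0)
  have hf : IsFlag f := (mem_filter.mp hf).2
  obtain ⟨l, hperm, halt⟩ : Alternating 1 (flagLabels lam f) := by
    by_contra h
    exact hind (ind_neg h)
  have hlen : l.length = n := by rw [← hperm.length_eq, length_flagLabels]
  obtain ⟨a, ha, hle⟩ := halt.exists_add_length_le_abs (by rintro rfl; simp at hlen; omega)
    (k := 0) fun b hb => abs_pos.mpr (flagLabels_ne_zero hcomp hf b (hperm.symm.subset hb))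
  obtain ⟨t, ht, rfl⟩ := exists_of_mem_flagLabels lam (hperm.symm.subset ha)
  exact ⟨flagVec f (t + 1), flagVec_ne_zero hf (by omega) (by omega), by rw [hlen] at hle; omega⟩

end OctahedralTucker

lemma Finset.min_ne_min_of_disjoint {α : Type*} [LinearOrder α] {A B : Finset α}
    (hAB : Disjoint A B) (hne : (A ∪ B).Nonempty) : A.min ≠ B.min := by
  intro h
  rcases A.eq_empty_or_nonempty with rfl | hA
  · rw [min_empty, eq_comm, min_eq_top] at h
    simp [h] at hne
  · obtain ⟨a, ha⟩ := min_of_nonempty hA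
    exact disjoint_left.mp hAB (mem_of_min ha) (mem_of_min (h ▸ ha))

namespace KneserGraph

open OctahedralTucker

variable {n k m : ℕ}

section Labelling

variable (C : (KneserGraph n k).Coloring (Fin m))

/-- Shifted by one, so that `0` means that `P` contains no vertex. -/
def colorSup (P : Finset (Fin n)) : ℕ :=
  (univ.filter fun S : {S : Finset (Fin n) // S.card = k} => S.1 ⊆ P).sup fun S => C S + 1

lemma colorSup_mono {P Q : Finset (Fin n)} (h : P ⊆ Q) : colorSup C P ≤ colorSup C Q :=
  sup_mono fun _ hS => mem_filter.mpr ⟨mem_univ _, (mem_filter.mp hS).2.trans h⟩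

lemma colorSup_le (P : Finset (Fin n)) : colorSup C P ≤ m :=
  Finset.sup_le fun S _ => (C S).isLt

lemma colorSup_pos {P : Finset (Fin n)} (hP : k ≤ #P) : 0 < colorSup C P := by
  obtain ⟨S, hSP, hS⟩ := exists_subset_card_eq hP
  exact Nat.succ_pos _ |>.trans_le (le_sup (f := fun S => (C S : ℕ) + 1)
    (mem_filter.mpr ⟨mem_univ ⟨S, hS⟩, hSP⟩))

lemma exists_of_colorSup_pos {P : Finset (Fin n)} (hP : 0 < colorSup C P) :
    ∃ S : {S : Finset (Fin n) // S.card = k}, S.1 ⊆ P ∧ colorSup C P = C S + 1 := by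
  have hne : (univ.filter fun S : {S : Finset (Fin n) // S.card = k} => S.1 ⊆ P).Nonempty := by
    rw [nonempty_iff_ne_empty]
    intro h
    simp [colorSup, h] at hP
  obtain ⟨S, hS, heq⟩ := exists_mem_eq_sup _ hne fun S => (C S : ℕ) + 1
  exact ⟨S, (mem_filter.mp hS).2, heq⟩

/-- Vertices inside disjoint sets are adjacent, so the largest colours differ. -/
lemma colorSup_ne (hk : 1 ≤ k) {A B : Finset (Fin n)} (hAB : Disjoint A B)
    (hA : 0 < colorSup C A) : colorSup C A ≠ colorSup C B := by
  intro heq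
  have hB : 0 < colorSup C B := heq ▸ hA
  obtain ⟨S, hSA, hS⟩ := exists_of_colorSup_pos C hA
  obtain ⟨T, hTB, hT⟩ := exists_of_colorSup_pos C hB
  rw [hS, hT] at heq
  have hST : Disjoint S.1 T.1 := (hAB.mono_left hSA).mono_right hTB
  have hSne : S ≠ T := by
    rintro rfl
    have := S.2
    rw [(disjoint_self_iff_empty _).mp hST, card_empty] at this
    omega
  exact C.valid ⟨hSne, hST⟩ (Fin.ext (Nat.succ_injective heq))

/-- Matoušek's label of the sign vector with positive support `A` and negative support `B`;
`A.min < B.min` says that its first nonzero entry is positive. -/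
def kneserLabel (A B : Finset (Fin n)) : ℤ :=
  if 2 * k ≤ #A + #B + 1 then
    if colorSup C B < colorSup C A then 2 * k - 2 + colorSup C A else -(2 * k - 2 + colorSup C B)
  else if A.min < B.min then #A + #B else -(#A + #B)

variable {C} (hk : 1 ≤ k)
include hk

lemma colorSup_ne_of_large {A B : Finset (Fin n)} (hAB : Disjoint A B)
    (hlarge : 2 * k ≤ #A + #B + 1) :
    colorSup C A ≠ colorSup C B ∧ 0 < max (colorSup C A) (colorSup C B) := by
  rcases le_or_gt k #A with hA | hA
  · have := colorSup_pos C hA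
    exact ⟨colorSup_ne C hk hAB this, lt_max_of_lt_left this⟩
  · have := colorSup_pos C (show k ≤ #B by omega)
    exact ⟨(colorSup_ne C hk hAB.symm this).symm, lt_max_of_lt_right this⟩

lemma abs_kneserLabel_of_large {A B : Finset (Fin n)} (hlarge : 2 * k ≤ #A + #B + 1) :
    |kneserLabel C A B| = 2 * k - 2 + max (colorSup C A) (colorSup C B) := by
  unfold kneserLabel
  rw [if_pos hlarge]
  split_ifs with h
  · rw [max_eq_left h.le, abs_of_nonneg (by omega)]
  · rw [max_eq_right (not_lt.mp h), abs_neg, abs_of_nonneg (by omega)]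

omit hk in
lemma abs_kneserLabel_of_small {A B : Finset (Fin n)} (hsmall : ¬ 2 * k ≤ #A + #B + 1) :
    |kneserLabel C A B| = #A + #B := by
  unfold kneserLabel
  rw [if_neg hsmall]
  split_ifs
  · exact abs_of_nonneg (by positivity)
  · rw [abs_neg, abs_of_nonneg (by positivity)]

lemma abs_kneserLabel_le (A B : Finset (Fin n)) : |kneserLabel C A B| ≤ 2 * k - 2 + m := by
  by_cases hlarge : 2 * k ≤ #A + #B + 1
  · rw [abs_kneserLabel_of_large hk hlarge]
    have := max_le (colorSup_le C A) (colorSup_le C B)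
    omega
  · rw [abs_kneserLabel_of_small hlarge]
    omega

lemma kneserLabel_swap {A B : Finset (Fin n)} (hAB : Disjoint A B) (hne : (A ∪ B).Nonempty) :
    kneserLabel C B A = -kneserLabel C A B := by
  unfold kneserLabel
  rw [add_comm #B #A, add_comm (#B : ℤ)]
  by_cases hlarge : 2 * k ≤ #A + #B + 1
  · obtain ⟨hne', -⟩ := colorSup_ne_of_large hk hAB hlarge
    simp only [if_pos hlarge]
    rcases lt_or_gt_of_ne hne' with h | h
    · rw [if_pos h, if_neg h.not_gt, neg_neg]
    · rw [if_neg h.not_gt, if_pos h]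
  · simp only [if_neg hlarge]
    rcases lt_or_gt_of_ne (Finset.min_ne_min_of_disjoint hAB hne) with h | h
    · rw [if_neg h.not_gt, if_pos h]
    · rw [if_pos h, if_neg h.not_gt, neg_neg]

lemma kneserLabel_ne_neg_of_large {A B A' B' : Finset (Fin n)} (hAB' : Disjoint A' B')
    (hA : A ⊆ A') (hB : B ⊆ B') (hlarge : 2 * k ≤ #A + #B + 1) :
    kneserLabel C A B ≠ -kneserLabel C A' B' := by
  have hlarge' : 2 * k ≤ #A' + #B' + 1 := by
    have := card_le_card hA; have := card_le_card hB; omega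
  have hne := (colorSup_ne_of_large (C := C) hk (hAB'.mono hA hB) hlarge).1
  have hne' := (colorSup_ne_of_large (C := C) hk hAB' hlarge').1
  have := colorSup_mono C hA
  have := colorSup_mono C hB
  unfold kneserLabel
  rw [if_pos hlarge, if_pos hlarge']
  split_ifs <;> omega

lemma kneserLabel_ne_neg {A B A' B' : Finset (Fin n)} (hAB' : Disjoint A' B') (hA : A ⊆ A')
    (hB : B ⊆ B') (hne : (A ∪ B).Nonempty) : kneserLabel C A B ≠ -kneserLabel C A' B' := by
  by_cases hlarge : 2 * k ≤ #A + #B + 1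
  · exact kneserLabel_ne_neg_of_large hk hAB' hA hB hlarge
  intro heq
  have habs : |kneserLabel C A B| = |kneserLabel C A' B'| := by rw [heq, abs_neg]
  have hpos : 0 < #A + #B := (card_pos.mpr hne).trans_le (card_union_le A B)
  have hcardA := card_le_card hA
  have hcardB := card_le_card hB
  rw [abs_kneserLabel_of_small hlarge] at habs
  by_cases hlarge' : 2 * k ≤ #A' + #B' + 1
  · rw [abs_kneserLabel_of_large hk hlarge'] at habs
    have := (colorSup_ne_of_large (C := C) hk hAB' hlarge').2
    omega
  · rw [abs_kneserLabel_of_small hlarge'] at habs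
    obtain rfl : A = A' := eq_of_subset_of_card_le hA (by omega)
    obtain rfl : B = B' := eq_of_subset_of_card_le hB (by omega)
    have h0 : kneserLabel C A B = 0 := by omega
    have := abs_kneserLabel_of_small (C := C) hlarge
    rw [h0, abs_zero] at this
    omega

end Labelling

section SignVectors

def posSupport (x : Fin n → ℤ) : Finset (Fin n) := univ.filter (0 < x ·)

def negSupport (x : Fin n → ℤ) : Finset (Fin n) := univ.filter (x · < 0)

lemma posSupport_neg (x : Fin n → ℤ) : posSupport (-x) = negSupport x := by
  ext; simp [posSupport, negSupport]

lemma negSupport_neg (x : Fin n → ℤ) : negSupport (-x) = posSupport x := by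
  ext; simp [posSupport, negSupport]

lemma disjoint_posSupport_negSupport (x : Fin n → ℤ) : Disjoint (posSupport x) (negSupport x) :=
  disjoint_filter.mpr fun _ _ h h' => (h.trans h').false

lemma posSupport_union_negSupport_nonempty {x : Fin n → ℤ} (hx : x ≠ 0) :
    (posSupport x ∪ negSupport x).Nonempty := by
  obtain ⟨i, hi⟩ := Function.ne_iff.mp hx
  have hi : x i ≠ 0 := hi
  refine ⟨i, ?_⟩
  simp only [posSupport, negSupport, mem_union, mem_filter, mem_univ, true_and]
  omega

lemma IsFace.posSupport_subset {x y : Fin n → ℤ} (h : IsFace x y) :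
    posSupport x ⊆ posSupport y := fun i hi => by
  simp only [posSupport, mem_filter, mem_univ, true_and] at hi ⊢
  rcases h i with h | h <;> omega

lemma IsFace.negSupport_subset {x y : Fin n → ℤ} (h : IsFace x y) :
    negSupport x ⊆ negSupport y := fun i hi => by
  simp only [negSupport, mem_filter, mem_univ, true_and] at hi ⊢
  rcases h i with h | h <;> omega

end SignVectors

theorem not_colorable (hk : 1 ≤ k) (hn : 2 * k - 1 ≤ n) :
    ¬ (KneserGraph n k).Colorable (n + 1 - 2 * k) := by
  rintro ⟨C⟩
  let lam x := kneserLabel C (posSupport x) (negSupport x)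
  obtain ⟨x, -, hx⟩ := exists_ne_zero_le_abs (by omega) lam
    (fun x hx => by
      simp only [lam, posSupport_neg, negSupport_neg]
      exact kneserLabel_swap hk (disjoint_posSupport_negSupport x)
        (posSupport_union_negSupport_nonempty hx))
    (fun x y hx hxy => kneserLabel_ne_neg hk (disjoint_posSupport_negSupport y)
      (IsFace.posSupport_subset hxy) (IsFace.negSupport_subset hxy)
      (posSupport_union_negSupport_nonempty hx))
  have := abs_kneserLabel_le (C := C) hk (posSupport x) (negSupport x)
  simp only [lam] at hx
  rw [Nat.cast_sub (by omega)] at this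
  push_cast at this
  omega

theorem colorable (hk : 1 ≤ k) (hn : 2 * k - 1 ≤ n) :
    (KneserGraph n k).Colorable (n + 2 - 2 * k) := by
  have hne (S : {S : Finset (Fin n) // #S = k}) : S.1.Nonempty := card_pos.mp (by rw [S.2]; omega)
  refine ⟨.mk (fun S => ⟨min (S.1.min' (hne S)) (n + 1 - 2 * k), by omega⟩)
    fun {S T} hST hc => ?_⟩
  obtain ⟨-, hdisj⟩ := hST
  have hc := congrArg Fin.val hc
  dsimp only at hc
  by_cases h : (S.1.min' (hne S) : ℕ) < n + 1 - 2 * k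
  · have : S.1.min' (hne S) = T.1.min' (hne T) := Fin.ext (by omega)
    exact disjoint_left.mp hdisj (min'_mem _ _) (by rw [this]; exact min'_mem _ _)
  · have hfar : Disjoint (S.1 ∪ T.1) (univ.filter fun i : Fin n => (i : ℕ) < n + 1 - 2 * k) := by
      refine disjoint_left.mpr fun i hi hi' => ?_
      rw [mem_filter] at hi'
      rcases mem_union.mp hi with hi | hi
      · have := S.1.min'_le i hi; omega
      · have := T.1.min'_le i hi; omega
    have := card_le_univ (S.1 ∪ T.1 ∪ univ.filter fun i : Fin n => (i : ℕ) < n + 1 - 2 * k)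
    rw [card_union_of_disjoint hfar, card_union_of_disjoint hdisj, S.2, T.2,
      Fin.card_filter_val_lt, Fintype.card_fin] at this
    omega

end KneserGraph

/-- Kneser's conjecture: for `k ≥ 1` and `n ≥ 2k-1`,
the chromatic number of the Kneser graph `KG(n,k)` equals `n - 2k + 2`. -/
theorem kneser_conjecture (n k : ℕ) (hk : 1 ≤ k) (hn : 2 * k - 1 ≤ n) :
    (KneserGraph n k).chromaticNumber = ((n + 2 - 2 * k : ℕ) : ℕ∞) := by
  have hm : n + 2 - 2 * k = n + 1 - 2 * k + 1 := by omega
  rw [hm, Nat.cast_succ, SimpleGraph.chromaticNumber_eq_iff_colorable_not_colorable]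
  exact ⟨hm ▸ KneserGraph.colorable hk hn, KneserGraph.not_colorable hk hn⟩
end

section
/- In the compatibility graph C_P of a Z_r-poset P, if A_1,...,A_k are vertices forming a clique and A_k is chosen such that for each j < k some nonidentity element ω^{s_j} satisfies ω^{s_j}.A_j ≤ A_k, and moreover the coordinates of A_k (viewed as a tuple in Hom_p(K_r, H)) are pairwise disjoint, then the exponents s_1,...,s_{k-1} ∈ {1,...,r-1} are pairwise distinct; consequently k ≤ r. -/
/-!
Every `A j` meets the vertex `A_k` through the shift `s j`: a point of the coordinate `t` of
`A j` lies in the coordinate `t - s j` of `A_k`. If `A i ≤ ω^g.A j`, one point of `A i` thus lies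
in the coordinates `-s i` and `g - s j` of `A_k`, which are disjoint unless `g = s j - s i`.
Since adjacent vertices are related by a nonidentity `g`, the `s j` are pairwise distinct, and
being nonzero there are at most `r - 1` of them.
-/

namespace HomPoset

variable {V : Type*} {H : SimpleGraph V} {r : ℕ}

theorem homShift_le_iff {g : ZMod r} {A B : HomPoset H r} :
    homShift H g A ≤ B ↔ ∀ t, A.1 (t + g) ⊆ B.1 t :=
  Iff.rfl

theorem le_homShift_iff {g : ZMod r} {A B : HomPoset H r} :
    A ≤ homShift H g B ↔ ∀ t, A.1 t ⊆ B.1 (t + g) :=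
  Iff.rfl

theorem homShift_le_iff_le_homShift_neg {g : ZMod r} {A B : HomPoset H r} :
    homShift H g A ≤ B ↔ A ≤ homShift H (-g) B := by
  rw [homShift_le_iff, le_homShift_iff]
  refine ⟨fun h t => ?_, fun h t => ?_⟩
  · simpa using h (t + -g)
  · simpa using h (t + g)

theorem mem_of_homShift_le {g t : ZMod r} {A B : HomPoset H r} (h : homShift H g A ≤ B)
    {x : V} (hx : x ∈ A.1 t) : x ∈ B.1 (t - g) :=
  homShift_le_iff.mp h (t - g) (by simpa using hx)

theorem compatGraph_adj_exists_le_homShift {x y : HomPoset H r} (h : (compatGraph H r).Adj x y) :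
    ∃ g : ZMod r, g ≠ 0 ∧ (x ≤ homShift H g y ∨ y ≤ homShift H g x) := by
  obtain ⟨-, g, hg, hxy | hyx | hyx | hxy⟩ := h
  · exact ⟨g, hg, .inl hxy⟩
  · exact ⟨-g, neg_ne_zero.mpr hg, .inr (homShift_le_iff_le_homShift_neg.mp hyx)⟩
  · exact ⟨g, hg, .inr hyx⟩
  · exact ⟨-g, neg_ne_zero.mpr hg, .inl (homShift_le_iff_le_homShift_neg.mp hxy)⟩

theorem eq_sub_of_le_homShift {C A B : HomPoset H r} {s s' g : ZMod r}
    (hdisj : ∀ i j, i ≠ j → Disjoint (C.1 i) (C.1 j))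
    (hA : homShift H s A ≤ C) (hB : homShift H s' B ≤ C) (hAB : A ≤ homShift H g B) :
    g = s' - s := by
  obtain ⟨x, hx⟩ := A.2.1 0
  have hxB : x ∈ B.1 g := by simpa using le_homShift_iff.mp hAB 0 hx
  by_contra hne
  refine Set.disjoint_left.mp (hdisj (0 - s) (g - s') fun h => hne ?_)
    (mem_of_homShift_le hA hx) (mem_of_homShift_le hB hxB)
  linear_combination -h

theorem shift_ne_of_compatGraph_adj {C A B : HomPoset H r} {s s' : ZMod r}
    (hdisj : ∀ i j, i ≠ j → Disjoint (C.1 i) (C.1 j))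
    (hA : homShift H s A ≤ C) (hB : homShift H s' B ≤ C) (hadj : (compatGraph H r).Adj A B) :
    s ≠ s' := by
  rintro rfl
  obtain ⟨g, hg, hAB | hBA⟩ := compatGraph_adj_exists_le_homShift hadj
  · exact hg (by simpa using eq_sub_of_le_homShift hdisj hA hB hAB)
  · exact hg (by simpa using eq_sub_of_le_homShift hdisj hB hA hBA)

end HomPoset

theorem clique_shift_exponents_distinct_general {V : Type*} (H : SimpleGraph V)
    (r m : ℕ) (hr : 2 ≤ r)
    (A : Fin m → HomPoset H r) (Ak : HomPoset H r)
    (hclique : ∀ i j, i ≠ j → (compatGraph H r).Adj (A i) (A j))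
    (hdisj : ∀ i j : ZMod r, i ≠ j → Disjoint (Ak.1 i) (Ak.1 j))
    (s : Fin m → ZMod r) (hs0 : ∀ i, s i ≠ 0)
    (hsle : ∀ i, homShift H (s i) (A i) ≤ Ak) :
    Function.Injective s ∧ m + 1 ≤ r := by
  have hs : Function.Injective s := fun i j hij => by
    by_contra hne
    exact HomPoset.shift_ne_of_compatGraph_adj hdisj (hsle i) (hsle j) (hclique i j hne) hij
  have : NeZero r := ⟨by omega⟩
  have hcard := Fintype.card_lt_of_injective_of_notMem s hs (b := 0) fun ⟨i, hi⟩ => hs0 i hi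
  rw [Fintype.card_fin, ZMod.card] at hcard
  exact ⟨hs, hcard⟩

/-- If `A_1, ..., A_m, A_k` form a clique in `C_{Hom_p(K_r, H)}`, the coordinates of the
vertex `A_k` are pairwise disjoint, and for each `j` a nonidentity shift `s j` satisfies
`ω^{s j}.A_j ≤ A_k`, then the exponents `s j` are pairwise distinct; hence `m + 1 ≤ r`. -/
theorem clique_shift_exponents_distinct {V : Type*} [Fintype V] (H : SimpleGraph V)
    (r m : ℕ) (hr : 2 ≤ r)
    (A : Fin m → HomPoset H r) (Ak : HomPoset H r)
    (hinj : Function.Injective A)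
    (hclique : ∀ i j, i ≠ j → (compatGraph H r).Adj (A i) (A j))
    (hAk : ∀ i, (compatGraph H r).Adj (A i) Ak)
    (hdisj : ∀ i j : ZMod r, i ≠ j → Disjoint (Ak.1 i) (Ak.1 j))
    (s : Fin m → ZMod r) (hs0 : ∀ i, s i ≠ 0)
    (hsle : ∀ i, homShift H (s i) (A i) ≤ Ak) :
    Function.Injective s ∧ m + 1 ≤ r :=
  clique_shift_exponents_distinct_general H r m hr A Ak hclique hdisj s hs0 hsle
end

section
/- For r = 2 the compatibility graph C_{Hom_p(K_2, H)} of any graph H is triangle-free, and for every C there exists n, k with χ(C_{Hom_p(K_2, KG(n,k))}) ≥ C; hence there exist triangle-free graphs of arbitrarily large chromatic number. -/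
/-!
For `r = 2` the swap `σ = homShift H 1` is a monotone involution of `Hom_p(K_2, H)`, and no
element lies below both some `z` and `σ z`, since a common point of `z 0` and `z 1` would be a loop
of `H`. Adjacency means `x ≤ σ y` or `y ≤ σ x`; orienting each edge of a triangle accordingly
yields a path `x → y → z`, which forces `x ≤ z`, and the third edge then puts `x` below `z` and
`σ z`, or below `x` and `σ x`.

High chromatic number is proved without Borsuk–Ulam, already for `KG(n, 1) = K_n`, whose
`Hom_p(K_2, ·)` consists of the pairs of disjoint nonempty subsets of the ground set, by a
Descartes-type construction. If the graph over `Ω` has `N` vertices and is not `k`-colourable, take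
`m = (k + 1) N` apexes and, for every injection `f` of the old vertices into `Fin m`, a copy of the
old graph over `{f} × Ω`, the copy of `v` being adjacent to the apex `f v`. In a
`(k + 1)`-colouring, pigeonhole gives `N` apexes of one colour `a`, hence an `f` landing in them, and
the copy over `f` avoids `a`, i.e. is `k`-coloured.
-/

open SimpleGraph Function

section Involution

variable {P : Type*} [Preorder P] {σ : P → P}

theorem le_of_le_of_le_involutive (hσ : Monotone σ) (hinv : Involutive σ) {x y z : P}
    (hxy : x ≤ σ y) (hyz : y ≤ σ z) : x ≤ z :=
  hxy.trans (hinv z ▸ hσ hyz)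

theorem not_triangle_of_involutive (hσ : Monotone σ) (hinv : Involutive σ)
    (hfree : ∀ w z, w ≤ z → w ≤ σ z → False) {a b c : P}
    (hab : a ≤ σ b ∨ b ≤ σ a) (hbc : b ≤ σ c ∨ c ≤ σ b) (hac : a ≤ σ c ∨ c ≤ σ a) : False := by
  -- Orienting `x → y` when `x ≤ σ y`, every tournament on three vertices has a path `x → y → z`.
  have path : ∀ {x y z}, x ≤ σ y → y ≤ σ z → (x ≤ σ z ∨ z ≤ σ x) → False := by
    intro x y z hxy hyz hxz
    have hle := le_of_le_of_le_involutive hσ hinv hxy hyz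
    rcases hxz with hxz | hzx
    · exact hfree x z hle hxz
    · exact hfree x x le_rfl (hle.trans hzx)
  rcases hab with hab | hba <;> rcases hbc with hbc | hcb
  · exact path hab hbc hac
  · rcases hac with hac | hca
    · exact path hac hcb (Or.inl hab)
    · exact path hca hab (Or.inl hcb)
  · rcases hac with hac | hca
    · exact path hba hac (Or.inl hbc)
    · exact path hbc hca (Or.inl hba)
  · exact path hcb hba (Or.symm hac)

end Involution

section HomPoset

variable {V : Type*} {H : SimpleGraph V} {r : ℕ}

instance [Finite V] [NeZero r] : Finite (HomPoset H r) := by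
  unfold HomPoset
  infer_instance

theorem homShift_mono (g : ZMod r) : Monotone (homShift H g) :=
  fun _ _ hxy i => hxy (i + g)

theorem homShift_homShift (g h : ZMod r) (x : HomPoset H r) :
    homShift H g (homShift H h x) = homShift H (g + h) x :=
  Subtype.ext <| funext fun i => congrArg x.1 (add_assoc i g h)

theorem homShift_zero (x : HomPoset H r) : homShift H 0 x = x :=
  Subtype.ext <| funext fun i => congrArg x.1 (add_zero i)

theorem homShift_one_involutive : Involutive (homShift H (1 : ZMod 2)) := fun x => by
  rw [homShift_homShift, show (1 + 1 : ZMod 2) = 0 from rfl, homShift_zero]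

theorem HomPoset.false_of_le_of_le_homShift_one {w z : HomPoset H 2} (hwz : w ≤ z)
    (hwz' : w ≤ homShift H 1 z) : False := by
  obtain ⟨a, ha⟩ := w.2.1 0
  exact H.loopless.irrefl a (z.2.2 0 1 (by decide) a (hwz 0 ha) a (hwz' 0 ha))

theorem compatGraph_two_adj_iff {x y : HomPoset H 2} :
    (compatGraph H 2).Adj x y ↔ x ≤ homShift H 1 y ∨ y ≤ homShift H 1 x := by
  have hswap : ∀ {u v : HomPoset H 2}, homShift H 1 u ≤ v → u ≤ homShift H 1 v :=
    fun {u v} h => homShift_one_involutive u ▸ homShift_mono 1 h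
  constructor
  · rintro ⟨-, g, hg, hc⟩
    obtain rfl : g = 1 := (by decide : ∀ g : ZMod 2, g ≠ 0 → g = 1) g hg
    rcases hc with h | h | h | h
    · exact .inl h
    · exact .inr (hswap h)
    · exact .inr h
    · exact .inl (hswap h)
  · intro h
    refine ⟨fun hxy => ?_, 1, by decide, h.elim .inl fun h => .inr (.inr (.inl h))⟩
    subst hxy
    exact HomPoset.false_of_le_of_le_homShift_one le_rfl (h.elim id id)

theorem compatGraph_two_cliqueFree_three (H : SimpleGraph V) : (compatGraph H 2).CliqueFree 3 := by
  classical
  intro t ht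
  obtain ⟨a, b, c, hab, hac, hbc, -⟩ := is3Clique_iff.mp ht
  exact not_triangle_of_involutive (homShift_mono 1) homShift_one_involutive
    (fun _ _ => HomPoset.false_of_le_of_le_homShift_one) (compatGraph_two_adj_iff.mp hab)
    (compatGraph_two_adj_iff.mp hbc) (compatGraph_two_adj_iff.mp hac)

end HomPoset

section Functoriality

variable {V W : Type*} {H : SimpleGraph V} {H' : SimpleGraph W} {r : ℕ}

def HomPoset.map (f : H ↪g H') (x : HomPoset H r) : HomPoset H' r :=
  ⟨fun i => f '' x.1 i, fun i => (x.2.1 i).image f, by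
    rintro i j hij _ ⟨a, ha, rfl⟩ _ ⟨b, hb, rfl⟩
    exact f.map_adj_iff.mpr (x.2.2 i j hij a ha b hb)⟩

theorem HomPoset.map_mono (f : H ↪g H') : Monotone (HomPoset.map (r := r) f) :=
  fun _ _ hxy i => Set.image_mono (hxy i)

theorem HomPoset.map_injective (f : H ↪g H') : Injective (HomPoset.map (r := r) f) :=
  fun _ _ hxy => Subtype.ext <| funext fun i =>
    Set.image_injective.mpr f.injective (congrFun (congrArg Subtype.val hxy) i)

def compatGraphMap (f : H ↪g H') : compatGraph H r →g compatGraph H' r where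
  toFun := HomPoset.map f
  map_rel' := by
    rintro x y ⟨hne, g, hg, hc⟩
    have hmono := HomPoset.map_mono (r := r) f
    exact ⟨(HomPoset.map_injective f).ne hne, g, hg,
      hc.imp (@hmono _ _) (Or.imp (@hmono _ _) (Or.imp (@hmono _ _) (@hmono _ _)))⟩

end Functoriality

section Descartes

variable {Ω : Type*} {m : ℕ}

abbrev descartesGround (Ω : Type*) (m : ℕ) : Type _ :=
  (HomPoset (⊤ : SimpleGraph Ω) 2 ↪ Fin m) × Ω

def liftHom (f : HomPoset (⊤ : SimpleGraph Ω) 2 ↪ Fin m) :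
    compatGraph (⊤ : SimpleGraph Ω) 2 →g compatGraph (⊤ : SimpleGraph (descartesGround Ω m)) 2 :=
  compatGraphMap (Embedding.completeGraph (Embedding.sectR f Ω))

-- The coordinates are swapped so that the copy of `v` over `f` lies below the swap of `apex (f v)`.
def apex [Nonempty (HomPoset (⊤ : SimpleGraph Ω) 2)]
    [Nonempty (HomPoset (⊤ : SimpleGraph Ω) 2 ↪ Fin m)] (s : Fin m) :
    HomPoset (⊤ : SimpleGraph (descartesGround Ω m)) 2 :=
  ⟨fun i => {p | ∃ u, p.1 u = s ∧ p.2 ∈ u.1 (i + 1)}, by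
    classical
    intro i
    obtain ⟨u⟩ := ‹Nonempty (HomPoset (⊤ : SimpleGraph Ω) 2)›
    obtain ⟨e⟩ := ‹Nonempty (HomPoset (⊤ : SimpleGraph Ω) 2 ↪ Fin m)›
    obtain ⟨ω, hω⟩ := u.2.1 (i + 1)
    exact ⟨(e.setValue u s, ω), u, e.setValue_eq u s, hω⟩, by
    rintro i j hij p ⟨u, hu, hpu⟩ q ⟨u', hu', hqu'⟩ rfl
    obtain rfl : u = u' := p.1.injective (hu.trans hu'.symm)
    exact (top_adj _ _).mp (u.2.2 (i + 1) (j + 1) (by simpa using hij) _ hpu _ hqu') rfl⟩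

theorem liftHom_adj_apex [Nonempty (HomPoset (⊤ : SimpleGraph Ω) 2)]
    [Nonempty (HomPoset (⊤ : SimpleGraph Ω) 2 ↪ Fin m)]
    (f : HomPoset (⊤ : SimpleGraph Ω) 2 ↪ Fin m) (v : HomPoset (⊤ : SimpleGraph Ω) 2) :
    (compatGraph (⊤ : SimpleGraph (descartesGround Ω m)) 2).Adj (liftHom f v) (apex (f v)) := by
  refine compatGraph_two_adj_iff.mpr (.inl fun i => ?_)
  rintro _ ⟨ω, hω, rfl⟩
  exact ⟨v, rfl, by rwa [add_assoc, show (1 + 1 : ZMod 2) = 0 from rfl, add_zero]⟩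

end Descartes

theorem exists_embedding_forall_eq_of_mul_le_card {α β γ : Type*} [Fintype α] [Fintype β]
    [Fintype γ] [Nonempty γ] (c : β → γ) (h : Fintype.card γ * Fintype.card α ≤ Fintype.card β) :
    ∃ y, ∃ f : α ↪ β, ∀ a, c (f a) = y := by
  classical
  obtain ⟨y, hy⟩ := Fintype.exists_le_card_fiber_of_mul_le_card c h
  obtain ⟨e⟩ := Embedding.nonempty_of_card_le (α := α) (β := {b // c b = y})
    (by rwa [Fintype.card_subtype])
  exact ⟨y, e.trans (Embedding.subtype _), fun a => (e a).2⟩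

theorem SimpleGraph.Coloring.colorable_of_forall_ne {V : Type*} {G : SimpleGraph V} {k : ℕ}
    (c : G.Coloring (Fin (k + 1))) (a : Fin (k + 1)) (h : ∀ v, c v ≠ a) : G.Colorable k :=
  ⟨Coloring.mk (fun v => (finSuccAboveEquiv a).symm ⟨c v, h v⟩) fun huv heq =>
    c.valid huv (congrArg Subtype.val ((finSuccAboveEquiv a).symm.injective heq))⟩

theorem not_colorable_descartesGround {Ω : Type*} [Finite Ω] {k : ℕ}
    (hΩ : ¬ (compatGraph (⊤ : SimpleGraph Ω) 2).Colorable k) :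
    ¬ (compatGraph (⊤ : SimpleGraph
      (descartesGround Ω ((k + 1) * Nat.card (HomPoset (⊤ : SimpleGraph Ω) 2))))
        2).Colorable (k + 1) := by
  have := Fintype.ofFinite (HomPoset (⊤ : SimpleGraph Ω) 2)
  have hcard : Fintype.card (Fin (k + 1)) * Fintype.card (HomPoset (⊤ : SimpleGraph Ω) 2) ≤
      Fintype.card (Fin ((k + 1) * Nat.card (HomPoset (⊤ : SimpleGraph Ω) 2))) := by
    simp [Nat.card_eq_fintype_card]
  have : Nonempty (HomPoset (⊤ : SimpleGraph Ω) 2) :=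
    not_isEmpty_iff.mp fun _ => hΩ (Colorable.of_isEmpty k)
  have : Nonempty (HomPoset (⊤ : SimpleGraph Ω) 2 ↪
      Fin ((k + 1) * Nat.card (HomPoset (⊤ : SimpleGraph Ω) 2))) :=
    Embedding.nonempty_of_card_le (le_of_mul_le_of_one_le_right hcard (by simp))
  rintro ⟨c⟩
  obtain ⟨a, f, hf⟩ := exists_embedding_forall_eq_of_mul_le_card (fun s => c (apex s)) hcard
  by_cases h : ∃ v, c (liftHom f v) = a
  · obtain ⟨v, hv⟩ := h
    exact c.valid (liftHom_adj_apex f v) (hv.trans (hf v).symm)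
  · exact hΩ (Coloring.colorable_of_forall_ne (c.comp (liftHom f)) a (not_exists.mp h))

theorem exists_not_colorable_compatGraph_top (k : ℕ) :
    ∃ (Ω : Type) (_ : Finite Ω), ¬ (compatGraph (⊤ : SimpleGraph Ω) 2).Colorable k := by
  induction k with
  | zero =>
    let tautological : HomPoset (⊤ : SimpleGraph (ZMod 2)) 2 :=
      ⟨fun i => {i}, fun i => Set.singleton_nonempty i, by
        rintro i j hij a rfl b rfl
        exact (top_adj a b).mpr hij⟩
    exact ⟨ZMod 2, inferInstance, fun h => (colorable_zero_iff.mp h).false tautological⟩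
  | succ k ih =>
    obtain ⟨Ω, _, hΩ⟩ := ih
    exact ⟨_, inferInstance, not_colorable_descartesGround hΩ⟩

def singletonKneserEmbedding (n : ℕ) : (⊤ : SimpleGraph (Fin n)) ↪g KneserGraph n 1 where
  toFun i := ⟨{i}, Finset.card_singleton i⟩
  inj' _ _ h := Finset.singleton_injective (congrArg Subtype.val h)
  map_rel_iff' :=
    ⟨fun h hij => h.1 (hij ▸ rfl), fun hij =>
      ⟨fun h => hij (Finset.singleton_injective (congrArg Subtype.val h)),
        Finset.disjoint_singleton.mpr hij⟩⟩

theorem exists_not_colorable_compatGraph_kneser (k : ℕ) :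
    ∃ n, ¬ (compatGraph (KneserGraph n 1) 2).Colorable k := by
  obtain ⟨Ω, _, hΩ⟩ := exists_not_colorable_compatGraph_top k
  have := Fintype.ofFinite Ω
  let e : (⊤ : SimpleGraph Ω) ↪g KneserGraph (Fintype.card Ω) 1 :=
    (Embedding.completeGraph (Fintype.equivFin Ω).toEmbedding).trans
      (singletonKneserEmbedding _)
  exact ⟨_, fun h => hΩ (h.of_hom (compatGraphMap e))⟩

/-- The compatibility graph `C_{Hom_p(K_2, H)}` is triangle-free for every graph `H`,
the graphs `C_{Hom_p(K_2, KG(n,k))}` have arbitrarily large chromatic number, and hence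
there exist triangle-free graphs of arbitrarily large chromatic number. -/
theorem triangle_free_high_chromatic :
    (∀ (V : Type) [Fintype V] (H : SimpleGraph V), (compatGraph H 2).CliqueFree 3) ∧
    (∀ C : ℕ, ∃ n k : ℕ,
      (C : ℕ∞) ≤ (compatGraph (KneserGraph n k) 2).chromaticNumber) ∧
    (∀ C : ℕ, ∃ (V : Type) (_ : Fintype V) (G : SimpleGraph V),
      G.CliqueFree 3 ∧ (C : ℕ∞) ≤ G.chromaticNumber) := by
  have high : ∀ C : ℕ, ∃ n, (C : ℕ∞) ≤ (compatGraph (KneserGraph n 1) 2).chromaticNumber :=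
    fun C => by
      obtain ⟨n, hn⟩ := exists_not_colorable_compatGraph_kneser C
      exact ⟨n, (lt_of_not_ge (mt chromaticNumber_le_iff_colorable.mp hn)).le⟩
  refine ⟨fun V _ H => compatGraph_two_cliqueFree_three H, fun C => ?_, fun C => ?_⟩
  · obtain ⟨n, hn⟩ := high C
    exact ⟨n, 1, hn⟩
  · obtain ⟨n, hn⟩ := high C
    exact ⟨_, Fintype.ofFinite _, _, compatGraph_two_cliqueFree_three _, hn⟩
end
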